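/- Let |φ⟩ be a unit vector orthogonal to a unit vector |ψ⟩. The projection of |φ⟩⊗|ψ⟩^{⊗l} onto the orthogonal complement of the symmetric subspace of H^{⊗(l+1)} equals (l/(l+1))·|φ⟩⊗|ψ⟩^{⊗l} − (1/(l+1))·Σ_{i=1}^{l} |ψ⟩^{⊗i}⊗|φ⟩⊗|ψ⟩^{⊗(l−i)}. -/

import Mathlib

/-! A permutation `π` moves the defect `φ` of `φ ⊗ ψ^{⊗l}` to slot `π 0`, and each slot is
reached by exactly `l !` permutations, so `Π_sym (φ ⊗ ψ^{⊗l})` is the average of the `l + 1`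
vectors with the defect in one slot. -/

open PiTensorProduct

theorem PiTensorProduct.reindex_tprod_ite {R M ι ι₂ : Type*} [CommSemiring R] [AddCommMonoid M]
    [Module R M] [DecidableEq ι] [DecidableEq ι₂]
    (e : ι ≃ ι₂) (i : ι) (x y : M) :
    reindex R (fun _ => M) e (tprod R fun j => if j = i then x else y) =
      tprod R fun j => if j = e i then x else y := by
  rw [reindex_tprod]
  congr 1
  funext j
  exact if_congr (Equiv.symm_apply_eq e) rfl rfl

theorem Equiv.Perm.sum_apply_zero_fin {M : Type*} [AddCommMonoid M] (n : ℕ)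
    (f : Fin (n + 1) → M) :
    ∑ π : Equiv.Perm (Fin (n + 1)), f (π 0) = n.factorial • ∑ i, f i := by
  rw [← Fintype.sum_equiv Equiv.Perm.decomposeFin.symm (fun p => f p.1) (fun π => f (π 0))
    (by simp), Fintype.sum_prod_type, Finset.smul_sum]
  simp [Finset.sum_const, Fintype.card_perm]

theorem sub_inv_factorial_smul_factorial_smul {K V : Type*} [Field K] [CharZero K]
    [AddCommGroup V] [Module K V] (n : ℕ) (x s : V) :
    x - ((n + 1).factorial : K)⁻¹ • (n.factorial • (x + s)) =
      ((n : K) / (n + 1)) • x - ((n : K) + 1)⁻¹ • s := by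
  have hn : (n : K) + 1 ≠ 0 := Nat.cast_add_one_ne_zero n
  have hf : (n.factorial : K) ≠ 0 := by exact_mod_cast n.factorial_ne_zero
  rw [← Nat.cast_smul_eq_nsmul K, Nat.factorial_succ]
  push_cast
  match_scalars
  · field_simp
    ring
  · field_simp

theorem antisymmetric_part_of_one_defect_general
    {H : Type*} [NormedAddCommGroup H] [InnerProductSpace ℂ H]
    (l : ℕ) (φ ψ : H) :
    PiTensorProduct.tprod ℂ (fun j : Fin (l + 1) => if j = 0 then φ else ψ)
      - (((l + 1).factorial : ℂ))⁻¹ •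
          ∑ π : Equiv.Perm (Fin (l + 1)),
            (PiTensorProduct.reindex ℂ (fun _ : Fin (l + 1) => H) π)
              (PiTensorProduct.tprod ℂ (fun j => if j = 0 then φ else ψ))
    = ((l : ℂ) / ((l : ℂ) + 1)) •
        PiTensorProduct.tprod ℂ (fun j : Fin (l + 1) => if j = 0 then φ else ψ)
      - ((l : ℂ) + 1)⁻¹ •
          ∑ i ∈ Finset.univ.erase (0 : Fin (l + 1)),
            PiTensorProduct.tprod ℂ (fun j => if j = i then φ else ψ) := by
  simp only [reindex_tprod_ite]
  rw [Equiv.Perm.sum_apply_zero_fin l (fun i => tprod ℂ fun j => if j = i then φ else ψ),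
    ← Finset.add_sum_erase _ _ (Finset.mem_univ 0)]
  exact sub_inv_factorial_smul_factorial_smul l _ _

/-- Let `φ` be a unit vector orthogonal to a unit vector `ψ`.  The projection of
`φ ⊗ ψ^{⊗l}` onto the orthogonal complement of the symmetric subspace of `H^{⊗(l+1)}`
(i.e. `(id - Π_sym)` applied to it, with `Π_sym = (1/(l+1)!) ∑_{π} P_π`) equals
`(l/(l+1)) • φ ⊗ ψ^{⊗l} - (1/(l+1)) • ∑_{i=1}^{l} ψ^{⊗i} ⊗ φ ⊗ ψ^{⊗(l-i)}`. -/
theorem antisymmetric_part_of_one_defect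
    {H : Type*} [NormedAddCommGroup H] [InnerProductSpace ℂ H] [FiniteDimensional ℂ H]
    (l : ℕ) (φ ψ : H) (hφ : ‖φ‖ = 1) (hψ : ‖ψ‖ = 1)
    (horth : inner (𝕜 := ℂ) φ ψ = 0) :
    PiTensorProduct.tprod ℂ (fun j : Fin (l + 1) => if j = 0 then φ else ψ)
      - (((l + 1).factorial : ℂ))⁻¹ •
          ∑ π : Equiv.Perm (Fin (l + 1)),
            (PiTensorProduct.reindex ℂ (fun _ : Fin (l + 1) => H) π)
              (PiTensorProduct.tprod ℂ (fun j => if j = 0 then φ else ψ))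
    = ((l : ℂ) / ((l : ℂ) + 1)) •
        PiTensorProduct.tprod ℂ (fun j : Fin (l + 1) => if j = 0 then φ else ψ)
      - ((l : ℂ) + 1)⁻¹ •
          ∑ i ∈ Finset.univ.erase (0 : Fin (l + 1)),
            PiTensorProduct.tprod ℂ (fun j => if j = i then φ else ψ) :=
  antisymmetric_part_of_one_defect_general l φ ψ
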